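/- The direct sum of k-1 three-point lines is a rank-(2k-2) real-representable matroid with no elementary rank-k flat; hence the bound 2k-1 in the Bonnice–Edelstein result is best possible. -/

import Mathlib

/-!
A three-point line is `U_{2,3}`: over any field it is represented by `e_b + e_c, e_b, e_c`, and
representations of the summands of a direct sum combine blockwise. A rank-`k` flat with `k`
elements is independent. If an independent flat `F` of the sum met some line in two points, the
third point of that line would lie outside `F`, so adding it to `F` would keep `F` independent,
which is impossible since the line would then be entirely contained in an independent set. Hence
`F` meets each of the `k - 1` lines at most once, so it has at most `k - 1` elements.
-/

open Set Matroid

namespace SG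

variable {α : Type*}

/-- The rank of a set in a matroid: the supremum of sizes of independent subsets. -/
noncomputable def rk (M : Matroid α) (X : Set α) : ℕ :=
  sSup (Set.ncard '' {I | M.Indep I ∧ I ⊆ X})

/-- The rank of a matroid. -/
noncomputable def rank (M : Matroid α) : ℕ := rk M M.E

/-- `F` is a rank-`k` flat of `M`. -/
def IsRkFlat (M : Matroid α) (k : ℕ) (F : Set α) : Prop := M.IsFlat F ∧ rk M F = k

/-- A matroid is loopless if every element has rank one. -/
def Loopless (M : Matroid α) : Prop := ∀ e ∈ M.E, rk M {e} = 1

/-- A matroid is simple if it has no loops and no parallel pairs. -/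
def Simple (M : Matroid α) : Prop :=
  Loopless M ∧ ∀ e ∈ M.E, ∀ f ∈ M.E, rk M {e, f} ≤ 1 → e = f

/-- `M` is representable over the field `𝔽`. -/
def Representable (𝔽 : Type) [Field 𝔽] (M : Matroid α) : Prop :=
  ∃ φ : α → (α →₀ 𝔽), ∀ I ⊆ M.E,
    (M.Indep I ↔ LinearIndependent 𝔽 (fun x : I => φ x.1))

/-- The contraction `M/C`, defined by duality: `M/C = (M✶ ＼ C)✶`. -/
noncomputable def contract (M : Matroid α) (C : Set α) : Matroid α :=
  (M✶ ↾ (M.E \ C))✶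

/-- `F` is an ordinary rank-`k` flat: the direct sum of a point and a rank-`(k-1)` flat. -/
def OrdinaryFlat (M : Matroid α) (k : ℕ) (F : Set α) : Prop :=
  IsRkFlat M k F ∧ ∃ P F₁, IsRkFlat M 1 P ∧ IsRkFlat M (k-1) F₁ ∧
    F = P ∪ F₁ ∧ rk M F = rk M P + rk M F₁

/-- `F` is an elementary rank-`k` flat: a rank-`k` flat with exactly `k` elements. -/
def ElementaryFlat (M : Matroid α) (k : ℕ) (F : Set α) : Prop :=
  IsRkFlat M k F ∧ F.ncard = k

/-- A three-point line: a simple rank-2 matroid on three elements (i.e. `U_{2,3}`). -/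
def IsThreePointLine (M : Matroid α) : Prop :=
  M.E.ncard = 3 ∧ Simple M ∧ rank M = 2

/-- The ternary affine plane AG(2,3): a simple rank-3 matroid on nine points
in which every line has exactly three points. -/
def IsAG23 (M : Matroid α) : Prop :=
  M.E.ncard = 9 ∧ Simple M ∧ rank M = 3 ∧ ∀ L, IsRkFlat M 2 L → L.ncard = 3

-- Both sides are `0` when `X` has infinite rank: `sSup` of an unbounded set of naturals and
-- `ENat.toNat ⊤` are both `0`.
lemma rk_eq_toNat_eRk (M : Matroid α) (X : Set α) : rk M X = (M.eRk X).toNat := by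
  obtain ⟨I, hI⟩ := M.exists_isBasis' X
  rw [← hI.encard_eq_eRk]
  by_cases hIfin : I.Finite
  · refine IsGreatest.csSup_eq ⟨⟨I, ⟨hI.indep, hI.subset⟩, rfl⟩, ?_⟩
    rintro _ ⟨J, ⟨hJ, hJX⟩, rfl⟩
    rw [ncard_def, ← ncard_def]
    exact ENat.toNat_le_toNat ((hJ.encard_le_eRk_of_subset hJX).trans hI.encard_eq_eRk.ge)
      hIfin.encard_lt_top.ne
  · rw [Set.Infinite.encard_eq hIfin, ENat.toNat_top]
    refine Nat.sSup_of_not_bddAbove fun ⟨n, hn⟩ => ?_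
    obtain ⟨J, hJI, -, hJ⟩ := Set.Infinite.exists_subset_ncard_eq hIfin (n + 1)
    have := hn ⟨J, ⟨hI.indep.subset hJI, hJI.trans hI.subset⟩, hJ⟩
    omega

lemma rank_eq_toNat_eRank (M : Matroid α) : rank M = M.eRank.toNat := by
  rw [rank, rk_eq_toNat_eRk, eRk_ground]

lemma indep_of_ncard_le_rk {M : Matroid α} {X : Set α} (hX : X.Finite) (h : X.ncard ≤ rk M X) :
    M.Indep X := by
  rw [indep_iff_eRk_eq_encard_of_finite hX]
  refine le_antisymm (M.eRk_le_encard X) ?_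
  rw [rk_eq_toNat_eRk] at h
  rw [← hX.cast_ncard_eq]
  exact (Nat.cast_le.2 h).trans (ENat.natCast_toNat_le_self _)

lemma _root_.Matroid.Indep.ncard_le_rk_of_subset {M : Matroid α} {I X : Set α} (hX : X.Finite)
    (hI : M.Indep I) (hIX : I ⊆ X) : I.ncard ≤ rk M X := by
  rw [rk_eq_toNat_eRk, ncard_def]
  exact ENat.toNat_le_toNat (hI.encard_le_eRk_of_subset hIX)
    ((M.eRk_le_encard X).trans_lt hX.encard_lt_top).ne

lemma _root_.Matroid.IsFlat.insert_indep {M : Matroid α} {F : Set α} {e : α} (hF : M.IsFlat F)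
    (hFi : M.Indep F) (he : e ∈ M.E) (heF : e ∉ F) : M.Indep (insert e F) :=
  (hFi.insert_indep_iff_of_notMem heF).2 ⟨he, hF.closure.symm ▸ heF⟩

namespace IsThreePointLine

variable {M : Matroid α} (hM : IsThreePointLine M)
include hM

lemma ground_finite : M.E.Finite :=
  Set.finite_of_ncard_pos (by rw [hM.1]; norm_num)

lemma eRank_eq_two : M.eRank = 2 := by
  have h := hM.2.2
  rwa [rank_eq_toNat_eRank, ENat.toNat_eq_iff two_ne_zero] at h

lemma indep_iff {I : Set α} : M.Indep I ↔ I ⊆ M.E ∧ I.ncard ≤ 2 := by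
  refine ⟨fun hI => ⟨hI.subset_ground, ?_⟩, fun ⟨hIE, hI2⟩ => ?_⟩
  · rw [← hM.2.2]
    exact hI.ncard_le_rk_of_subset hM.ground_finite hI.subset_ground
  have hIfin : I.Finite := hM.ground_finite.subset hIE
  refine indep_of_ncard_le_rk hIfin ?_
  interval_cases h : I.ncard
  · exact Nat.zero_le _
  · obtain ⟨e, rfl⟩ := Set.ncard_eq_one.mp h
    exact (hM.2.1.1 e (hIE rfl)).ge
  · obtain ⟨e, f, hef, rfl⟩ := Set.ncard_eq_two.mp h
    by_contra! hlt
    exact hef (hM.2.1.2 e (hIE (by simp)) f (hIE (by simp)) (by omega))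

lemma subsingleton_of_forall_insert_indep {I : Set α} (hI : M.Indep I)
    (hins : ∀ t ∈ M.E, t ∉ I → M.Indep (insert t I)) : I.Subsingleton := by
  rw [hM.indep_iff] at hI
  have hIfin : I.Finite := hM.ground_finite.subset hI.1
  have := hIfin.to_subtype
  rw [← Set.ncard_le_one_iff_subsingleton]
  by_contra! h1
  obtain ⟨t, htE, htI⟩ := Set.exists_mem_notMem_of_ncard_lt_ncard (s := I) (t := M.E)
    (by rw [hM.1]; omega) hIfin
  have := (hM.indep_iff.1 (hins t htE htI)).2
  rw [Set.ncard_insert_of_notMem htI hIfin] at this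
  omega

lemma representable (𝔽 : Type) [Field 𝔽] : Representable 𝔽 M := by
  classical
  obtain ⟨a, b, c, hab, hac, hbc, hE⟩ := Set.ncard_eq_three.mp hM.1
  set φ : α → (α →₀ 𝔽) := fun x => if x = a then .single b 1 + .single c 1 else .single x 1
  have hφb : φ b = .single b 1 := if_neg hab.symm
  have hφc : φ c = .single c 1 := if_neg hac.symm
  have hbc_indep : LinearIndepOn 𝔽 φ {b, c} := by
    refine (LinearIndepOn.pair_iff φ hbc).2 fun s t hst => ?_
    have hb := congr($hst b)
    have hc := congr($hst c)
    simp [hφb, hφc, hbc, hbc.symm] at hb hc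
    exact ⟨hb, hc⟩
  have hab_indep : LinearIndepOn 𝔽 φ {a, b} := by
    refine (LinearIndepOn.pair_iff φ hab).2 fun s t hst => ?_
    have hb := congr($hst b)
    have hc := congr($hst c)
    simp [φ, hbc, hbc.symm, hab.symm] at hb hc
    exact ⟨hc, by simpa [hc] using hb⟩
  have hac_indep : LinearIndepOn 𝔽 φ {a, c} := by
    refine (LinearIndepOn.pair_iff φ hac).2 fun s t hst => ?_
    have hb := congr($hst b)
    have hc := congr($hst c)
    simp [φ, hbc, hbc.symm, hac.symm] at hb hc
    exact ⟨hb, by simpa [hb] using hc⟩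
  have hdep : ¬ LinearIndepOn 𝔽 φ {a, b, c} := by
    rw [linearIndepOn_insert (by simp [hab, hac])]
    rintro ⟨-, hspan⟩
    refine hspan ?_
    simp only [φ, if_pos rfl]
    exact Submodule.add_mem _ (Submodule.subset_span ⟨b, by simp, hφb⟩)
      (Submodule.subset_span ⟨c, by simp, hφc⟩)
  refine ⟨φ, fun I hIE => ?_⟩
  rw [hM.indep_iff, and_iff_right hIE]
  rw [hE] at hIE
  constructor
  · intro hI2
    have hmiss : a ∉ I ∨ b ∉ I ∨ c ∉ I := by
      by_contra! h
      have hIE' : I = {a, b, c} := hIE.antisymm (by simp [Set.insert_subset_iff, h])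
      have := hM.1
      rw [hE, ← hIE'] at this
      omega
    rcases hmiss with h | h | h
    · exact hbc_indep.mono fun x hx => by rcases hIE hx with rfl | rfl | rfl <;> simp_all
    · exact hac_indep.mono fun x hx => by rcases hIE hx with rfl | rfl | rfl <;> simp_all
    · exact hab_indep.mono fun x hx => by rcases hIE hx with rfl | rfl | rfl <;> simp_all
  · intro hI
    by_contra! hI3
    refine hdep (Set.eq_of_subset_of_ncard_le hIE ?_ (hE ▸ hM.ground_finite) ▸ hI)
    rw [← hE, hM.1]
    omega

end IsThreePointLine

section Sum

variable {ι β : Type*}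

lemma preimage_mk_sum'_ground (L : ι → Matroid β) (i : ι) :
    Prod.mk i ⁻¹' (Matroid.sum' L).E = (L i).E := by
  ext x
  simp

lemma eRank_sum' [Finite ι] (L : ι → Matroid β) :
    (Matroid.sum' L).eRank = ∑ᶠ i, (L i).eRank := by
  choose B hB using fun i => (L i).exists_isBase
  have hbase : (Matroid.sum' L).IsBase (⋃ i, Prod.mk i '' B i) := by
    rw [Matroid.sum'_isBase_iff]
    intro i
    convert hB i
    ext x
    simp
  rw [← hbase.encard_eq_eRank, Set.encard_iUnion_of_finite]
  · exact finsum_congr fun i => by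
      rw [(Prod.mk_right_injective i).encard_image, (hB i).encard_eq_eRank]
  · intro i j hij
    simp only [Function.onFun, Set.disjoint_left]
    rintro _ ⟨x, -, rfl⟩ ⟨y, -, h⟩
    exact hij (congrArg Prod.fst h).symm

def sigmaPreimageMkEquiv (I : Set (ι × β)) : (Σ i, Prod.mk i ⁻¹' I) ≃ I where
  toFun p := ⟨(p.1, p.2), p.2.2⟩
  invFun x := ⟨x.1.1, x.1.2, x.2⟩
  left_inv _ := rfl
  right_inv _ := rfl

lemma Representable.sum' {𝔽 : Type} [Field 𝔽] {L : ι → Matroid β}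
    (h : ∀ i, Representable 𝔽 (L i)) : Representable 𝔽 (Matroid.sum' L) := by
  classical
  choose φ hφ using h
  set e := (Finsupp.curryLinearEquiv 𝔽 : (ι × β →₀ 𝔽) ≃ₗ[𝔽] _).symm
  refine ⟨fun x => e (.single x.1 (φ x.1 x.2)), fun I hIE => ?_⟩
  have hfib (i : ι) : Prod.mk i ⁻¹' I ⊆ (L i).E :=
    (Set.preimage_mono hIE).trans (preimage_mk_sum'_ground L i).subset
  calc (Matroid.sum' L).Indep I
      ↔ ∀ i, LinearIndependent 𝔽 (fun y : Prod.mk i ⁻¹' I => φ i y) := by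
        rw [Matroid.sum'_indep_iff]
        exact forall_congr' fun i => hφ i _ (hfib i)
    _ ↔ LinearIndependent 𝔽 (fun p : Σ i, Prod.mk i ⁻¹' I => Finsupp.single p.1 (φ p.1 p.2)) :=
        Finsupp.linearIndependent_single_iff.symm
    _ ↔ LinearIndependent 𝔽 (fun x : I => Finsupp.single x.1.1 (φ x.1.1 x.1.2)) :=
        linearIndependent_equiv' (sigmaPreimageMkEquiv I) rfl
    _ ↔ _ := (e.toLinearMap.linearIndependent_iff_of_injOn e.injective.injOn).symm

lemma injOn_fst_of_isFlat_of_indep {L : ι → Matroid β}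
    (hL : ∀ i, IsThreePointLine (L i)) {F : Set (ι × β)} (hF : (Matroid.sum' L).IsFlat F)
    (hFi : (Matroid.sum' L).Indep F) : Set.InjOn Prod.fst F := by
  rintro ⟨i, x⟩ hx ⟨j, y⟩ hy (rfl : i = j)
  have hblock : (Prod.mk i ⁻¹' F).Subsingleton := by
    refine (hL i).subsingleton_of_forall_insert_indep (Matroid.sum'_indep_iff.1 hFi i)
      fun t ht htF => ?_
    have hE : (i, t) ∈ (Matroid.sum' L).E := by
      rwa [← Set.mem_preimage, preimage_mk_sum'_ground]
    have := Matroid.sum'_indep_iff.1 (hF.insert_indep hFi hE htF) i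
    exact this.subset
      (Set.insert_subset (Set.mem_insert _ _) (Set.preimage_mono (Set.subset_insert _ _)))
  rw [hblock hx hy]

end Sum

/-- The direct sum of `k-1` three-point lines is a rank-`(2k-2)` real-representable matroid
with no elementary rank-`k` flat: the bound `2k-1` is best possible. -/
theorem three_point_lines_sum {α : Type*} (k : ℕ) (hk : 2 ≤ k)
    (L : Fin (k - 1) → Matroid α) (hL : ∀ i, IsThreePointLine (L i)) :
    rank (Matroid.sum' L) = 2 * k - 2 ∧ Representable ℝ (Matroid.sum' L) ∧
      ¬ ∃ F, ElementaryFlat (Matroid.sum' L) k F := by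
  refine ⟨?_, Representable.sum' fun i => (hL i).representable ℝ, ?_⟩
  · rw [rank_eq_toNat_eRank, eRank_sum', finsum_eq_sum_of_fintype,
      Finset.sum_congr rfl fun i _ => (hL i).eRank_eq_two, Finset.sum_const, Finset.card_univ,
      Fintype.card_fin, nsmul_eq_mul, ENat.toNat_mul, ENat.toNat_natCast]
    simp only [ENat.toNat_ofNat]
    omega
  · rintro ⟨F, ⟨hFflat, hFrk⟩, hFcard⟩
    have hFfin : F.Finite := Set.finite_of_ncard_pos (by omega)
    have hFind := indep_of_ncard_le_rk hFfin (hFcard.trans hFrk.symm).le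
    have hFle := Set.ncard_le_ncard_of_injOn Prod.fst (fun _ _ => Set.mem_univ _)
      (injOn_fst_of_isFlat_of_indep hL hFflat hFind)
    rw [Set.ncard_univ, Nat.card_eq_fintype_card, Fintype.card_fin] at hFle
    omega

end SG
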